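/- arXiv:2510.00717 — 7 statements merged into one kernel-verified Lean document; each statement's English description precedes it below -/
import Mathlib

section
/- If A_K ∈ ℝ^{n×n} is Schur and B ∈ ℝ^{n×m} is nonzero, then any ρ > 0 such that A_K + BΔ is Schur for all Δ ∈ B(0,ρ) satisfies ρ < (n − tr(A_K))·‖B‖ / tr(BBᵀ). In particular the supremum of such ρ is finite. -/
open Matrix

/-- Spectral norm (operator 2-norm) of a real matrix. -/
noncomputable def sNorm {m n : ℕ} (M : Matrix (Fin m) (Fin n) ℝ) : ℝ :=
  ‖(Matrix.toEuclideanLin M).toContinuousLinearMap‖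

/-- A real square matrix is Schur if all its complex eigenvalues have modulus < 1. -/
def IsSchur {n : ℕ} (A : Matrix (Fin n) (Fin n) ℝ) : Prop :=
  ∀ μ ∈ spectrum ℂ (A.map Complex.ofReal), ‖μ‖ < 1

/-!
Take `Δ = c • Bᵀ` with `c = ρ / ‖B‖`, so that `‖Δ‖ = ρ`. The trace of the Schur matrix
`AK + c • B * Bᵀ` is the sum of its `n` complex eigenvalues, each of real part `< 1`, hence
`tr AK + c · tr (B * Bᵀ) < n`, which rearranges to the bound on `ρ`.
-/

open scoped Matrix.Norms.L2Operator

section sNorm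

variable {m n : ℕ}

lemma sNorm_eq_norm (M : Matrix (Fin m) (Fin n) ℝ) : sNorm M = ‖M‖ := rfl

lemma sNorm_transpose (M : Matrix (Fin m) (Fin n) ℝ) : sNorm Mᵀ = sNorm M := by
  simp only [sNorm_eq_norm, ← conjTranspose_eq_transpose_of_trivial, l2_opNorm_conjTranspose]

lemma sNorm_smul (c : ℝ) (M : Matrix (Fin m) (Fin n) ℝ) : sNorm (c • M) = |c| * sNorm M := by
  simp only [sNorm_eq_norm, norm_smul, Real.norm_eq_abs]

lemma sNorm_pos {M : Matrix (Fin m) (Fin n) ℝ} (hM : M ≠ 0) : 0 < sNorm M := by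
  rwa [sNorm_eq_norm, norm_pos_iff]

end sNorm

lemma trace_mul_transpose_pos {ι κ : Type*} [Fintype ι] [Fintype κ] {B : Matrix ι κ ℝ}
    (hB : B ≠ 0) : 0 < (B * Bᵀ).trace := by
  rw [← conjTranspose_eq_transpose_of_trivial]
  exact (posSemidef_self_mul_conjTranspose B).trace_nonneg.lt_of_ne'
    (trace_mul_conjTranspose_self_eq_zero_iff.not.mpr hB)

lemma IsSchur.trace_lt {n : ℕ} [NeZero n] {M : Matrix (Fin n) (Fin n) ℝ} (hM : IsSchur M) :
    M.trace < n := by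
  set roots := (M.map Complex.ofReal).charpoly.roots
  have hcard : Multiset.card roots = n := by
    rw [(Polynomial.splits_iff_card_roots).mp (IsAlgClosed.splits _),
      charpoly_natDegree_eq_dim, Fintype.card_fin]
  have hre : M.trace = (roots.map Complex.re).sum := by
    have htrace : (M.map Complex.ofReal).trace = M.trace := by simp [trace]
    rw [← Complex.ofReal_re M.trace, ← htrace, trace_eq_sum_roots_charpoly]
    exact map_multiset_sum Complex.reAddGroupHom roots
  have hne : roots ≠ 0 := by
    rw [← Multiset.card_pos, hcard]; exact Nat.pos_of_ne_zero (NeZero.ne n)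
  calc M.trace = (roots.map Complex.re).sum := hre
    _ < (roots.map fun _ => (1 : ℝ)).sum :=
      Multiset.sum_lt_sum_of_nonempty hne fun μ hμ =>
        (Complex.re_le_norm μ).trans_lt <| hM μ <| mem_spectrum_of_isRoot_charpoly <|
          Polynomial.isRoot_of_mem_roots hμ
    _ = n := by simp [hcard]

lemma lt_of_forall_isSchur_add_mul {n m : ℕ} {AK : Matrix (Fin n) (Fin n) ℝ}
    {B : Matrix (Fin n) (Fin m) ℝ} (hB : B ≠ 0) {ρ : ℝ} (hρ : 0 ≤ ρ)
    (hS : ∀ Δ : Matrix (Fin m) (Fin n) ℝ, sNorm Δ ≤ ρ → IsSchur (AK + B * Δ)) :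
    ρ < ((n : ℝ) - AK.trace) * sNorm B / (B * Bᵀ).trace := by
  have : NeZero n := ⟨by rintro rfl; exact hB (Subsingleton.elim _ _)⟩
  have hBnorm := sNorm_pos hB
  set c := ρ / sNorm B
  have hc : c * sNorm B = ρ := div_mul_cancel₀ _ hBnorm.ne'
  have hΔ : sNorm (c • Bᵀ) = ρ := by
    rw [sNorm_smul, sNorm_transpose, abs_of_nonneg (by positivity), hc]
  have htrace := (hS _ hΔ.le).trace_lt
  rw [Matrix.mul_smul, trace_add, trace_smul, smul_eq_mul] at htrace
  rw [lt_div_iff₀ (trace_mul_transpose_pos hB), ← hc]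
  nlinarith

theorem stmt1_general {n m : ℕ} (AK : Matrix (Fin n) (Fin n) ℝ) (B : Matrix (Fin n) (Fin m) ℝ)
    (hB : B ≠ 0) :
    (∀ ρ : ℝ, 0 < ρ →
      (∀ Δ : Matrix (Fin m) (Fin n) ℝ, sNorm Δ ≤ ρ → IsSchur (AK + B * Δ)) →
      ρ < ((n : ℝ) - AK.trace) * sNorm B / (B * Bᵀ).trace) ∧
    BddAbove {ρ : ℝ | 0 < ρ ∧
      ∀ Δ : Matrix (Fin m) (Fin n) ℝ, sNorm Δ ≤ ρ → IsSchur (AK + B * Δ)} :=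
  ⟨fun _ hρ hS => lt_of_forall_isSchur_add_mul hB hρ.le hS,
    ⟨_, fun _ ⟨hρ, hS⟩ => (lt_of_forall_isSchur_add_mul hB hρ.le hS).le⟩⟩

theorem stmt1 {n m : ℕ} (AK : Matrix (Fin n) (Fin n) ℝ) (B : Matrix (Fin n) (Fin m) ℝ)
    (hA : IsSchur AK) (hB : B ≠ 0) :
    (∀ ρ : ℝ, 0 < ρ →
      (∀ Δ : Matrix (Fin m) (Fin n) ℝ, sNorm Δ ≤ ρ → IsSchur (AK + B * Δ)) →
      ρ < ((n : ℝ) - AK.trace) * sNorm B / (B * Bᵀ).trace) ∧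
    BddAbove {ρ : ℝ | 0 < ρ ∧
      ∀ Δ : Matrix (Fin m) (Fin n) ℝ, sNorm Δ ≤ ρ → IsSchur (AK + B * Δ)} :=
  stmt1_general AK B hB
end

section
/- Let Π be a symmetric (q+r)×(q+r) real matrix with blocks Π₁₁ ∈ Sym(q), Π₁₂ = Π₂₁ᵀ, Π₂₂ ∈ Sym(r), such that Π₂₂ ≤ 0 and ker Π₂₂ ⊆ ker Π₁₂. Then the set Z_r(Π) = { Z ∈ ℝ^{r×q} : [I; Z]ᵀ Π [I; Z] ≥ 0 } is nonempty if and only if the generalized Schur complement Π|Π₂₂ = Π₁₁ − Π₁₂ Π₂₂† Π₂₁ is positive semidefinite. -/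
/-!
Write `A, B, C` for the blocks `Π₁₁, Π₁₂, Π₂₂` and let `C G C = C`. Transposing gives
`C Gᵀ C = C`, so the columns of `Gᵀ C - 1` lie in `ker C ⊆ ker B`, i.e. `B Gᵀ C = B`.
Completing the square then yields
`[I; Z]ᵀ Π [I; Z] = (A - B G Bᵀ) + (Z + G Bᵀ)ᵀ C (Z + G Bᵀ)`.
Since `C ≤ 0` the second summand is negative semidefinite, so the left side can only be
positive semidefinite when the Schur complement is; conversely `Z = -G Bᵀ` makes it vanish.
-/

open Matrix

namespace Matrix

variable {m n p R : Type*}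

-- Without the second `(1 : Matrix m m R)` ascription, the outer `*` elaborates through the
-- `CStarMatrix` instance and the lemma no longer rewrites ordinary matrix products.
theorem fromRows_one_transpose_mul_mul [CommRing R] [Fintype m] [Fintype n] [DecidableEq m]
    (P : Matrix (m ⊕ n) (m ⊕ n) R) (Z : Matrix n m R) :
    (fromRows (1 : Matrix m m R) Z)ᵀ * P * fromRows (1 : Matrix m m R) Z =
      P.toBlocks₁₁ + P.toBlocks₁₂ * Z + Zᵀ * P.toBlocks₂₁ + Zᵀ * P.toBlocks₂₂ * Z := by
  conv_lhs => rw [← fromBlocks_toBlocks P]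
  rw [transpose_fromRows, transpose_one, Matrix.mul_assoc, fromBlocks_mul_fromRows,
    fromCols_mul_fromRows]
  simp only [Matrix.mul_one, Matrix.one_mul, Matrix.mul_add, ← Matrix.mul_assoc]
  abel

theorem mul_eq_zero_of_mulVec_eq_zero_imp [NonUnitalNonAssocSemiring R] [Fintype n]
    {B : Matrix m n R} {C : Matrix p n R} (hker : ∀ x, C *ᵥ x = 0 → B *ᵥ x = 0)
    {N : Matrix n p R} (hN : C * N = 0) : B * N = 0 := by
  ext i j
  have hcol : C *ᵥ (fun k ↦ N k j) = 0 := funext fun l ↦ congrFun (congrFun hN l) j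
  exact congrFun (hker _ hcol) i

theorem mul_mul_eq_self_of_mulVec_eq_zero_imp [Ring R] [Fintype n] [DecidableEq n]
    {B : Matrix m n R} {C G : Matrix n n R} (hker : ∀ x, C *ᵥ x = 0 → B *ᵥ x = 0)
    (hG : C * G * C = C) : B * G * C = B := by
  have h : B * (G * C - 1) = 0 :=
    mul_eq_zero_of_mulVec_eq_zero_imp hker (by rw [Matrix.mul_sub, ← Matrix.mul_assoc, hG]; simp)
  rwa [Matrix.mul_sub, Matrix.mul_one, sub_eq_zero, ← Matrix.mul_assoc] at h

theorem add_mul_add_transpose_mul_mul_eq [CommRing R] [Fintype m] [Fintype n]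
    (A : Matrix m m R) {B : Matrix m n R} {C G : Matrix n n R} (Z : Matrix n m R)
    (hC : Cᵀ = C) (hB : B * Gᵀ * C = B) :
    A + B * Z + Zᵀ * Bᵀ + Zᵀ * C * Z =
      A - B * G * Bᵀ + (Z + G * Bᵀ)ᵀ * C * (Z + G * Bᵀ) := by
  have hBt : C * (G * Bᵀ) = Bᵀ := by
    simpa only [transpose_mul, transpose_transpose, hC, Matrix.mul_assoc] using
      congrArg transpose hB
  rw [transpose_add, transpose_mul, transpose_transpose, Matrix.add_mul, Matrix.add_mul, hB,
    Matrix.mul_add, Matrix.mul_add, Matrix.mul_assoc Zᵀ C (G * Bᵀ), hBt, ← Matrix.mul_assoc B G]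
  abel

theorem exists_posSemidef_add_mul_add_transpose_mul_mul_iff [CommRing R] [PartialOrder R]
    [StarRing R] [TrivialStar R] [AddLeftMono R] [Fintype m] [Fintype n]
    (A : Matrix m m R) {B : Matrix m n R} {C G : Matrix n n R}
    (hC : (-C).PosSemidef) (hB : B * Gᵀ * C = B) :
    (∃ Z : Matrix n m R, (A + B * Z + Zᵀ * Bᵀ + Zᵀ * C * Z).PosSemidef) ↔
      (A - B * G * Bᵀ).PosSemidef := by
  have hCt : C.IsSymm := by
    simpa [conjTranspose_eq_transpose_of_trivial] using hC.1
  simp only [add_mul_add_transpose_mul_mul_eq A _ hCt.eq hB]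
  constructor
  · rintro ⟨Z, hZ⟩
    have hW := hC.conjTranspose_mul_mul_same (Z + G * Bᵀ)
    rw [conjTranspose_eq_transpose_of_trivial, Matrix.mul_neg, Matrix.neg_mul] at hW
    simpa using hZ.add hW
  · intro hS
    exact ⟨-(G * Bᵀ), by simpa using hS⟩

end Matrix

theorem stmt8_general {q r : ℕ} (Pm : Matrix (Fin q ⊕ Fin r) (Fin q ⊕ Fin r) ℝ)
    (hsym : Pm.IsSymm)
    (h22 : (-(Pm.toBlocks₂₂)).PosSemidef)
    (hker : ∀ x : Fin r → ℝ, (Pm.toBlocks₂₂).mulVec x = 0 → (Pm.toBlocks₁₂).mulVec x = 0)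
    -- Pd is the Moore–Penrose pseudoinverse of Π₂₂ (the four Penrose conditions):
    (Pd : Matrix (Fin r) (Fin r) ℝ)
    (hPd1 : Pm.toBlocks₂₂ * Pd * Pm.toBlocks₂₂ = Pm.toBlocks₂₂) :
    (∃ Z : Matrix (Fin r) (Fin q) ℝ,
        ((Matrix.fromRows (1 : Matrix (Fin q) (Fin q) ℝ) Z)ᵀ * Pm *
          Matrix.fromRows (1 : Matrix (Fin q) (Fin q) ℝ) Z).PosSemidef) ↔
    (Pm.toBlocks₁₁ - Pm.toBlocks₁₂ * Pd * Pm.toBlocks₂₁).PosSemidef := by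
  rw [← fromBlocks_toBlocks Pm, isSymm_fromBlocks_iff] at hsym
  obtain ⟨-, h21, -, h22s⟩ := hsym
  have hPdt : Pm.toBlocks₂₂ * Pdᵀ * Pm.toBlocks₂₂ = Pm.toBlocks₂₂ := by
    simpa only [transpose_mul, h22s.eq, Matrix.mul_assoc] using congrArg transpose hPd1
  simp only [fromRows_one_transpose_mul_mul, ← h21]
  exact exists_posSemidef_add_mul_add_transpose_mul_mul_iff _ h22
    (mul_mul_eq_self_of_mulVec_eq_zero_imp hker hPdt)

theorem stmt8 {q r : ℕ} (Pm : Matrix (Fin q ⊕ Fin r) (Fin q ⊕ Fin r) ℝ)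
    (hsym : Pm.IsSymm)
    (h22 : (-(Pm.toBlocks₂₂)).PosSemidef)
    (hker : ∀ x : Fin r → ℝ, (Pm.toBlocks₂₂).mulVec x = 0 → (Pm.toBlocks₁₂).mulVec x = 0)
    -- Pd is the Moore–Penrose pseudoinverse of Π₂₂ (the four Penrose conditions):
    (Pd : Matrix (Fin r) (Fin r) ℝ)
    (hPd1 : Pm.toBlocks₂₂ * Pd * Pm.toBlocks₂₂ = Pm.toBlocks₂₂)
    (hPd2 : Pd * Pm.toBlocks₂₂ * Pd = Pd)
    (hPd3 : (Pm.toBlocks₂₂ * Pd)ᵀ = Pm.toBlocks₂₂ * Pd)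
    (hPd4 : (Pd * Pm.toBlocks₂₂)ᵀ = Pd * Pm.toBlocks₂₂) :
    (∃ Z : Matrix (Fin r) (Fin q) ℝ,
        ((Matrix.fromRows (1 : Matrix (Fin q) (Fin q) ℝ) Z)ᵀ * Pm *
          Matrix.fromRows (1 : Matrix (Fin q) (Fin q) ℝ) Z).PosSemidef) ↔
    (Pm.toBlocks₁₁ - Pm.toBlocks₁₂ * Pd * Pm.toBlocks₂₁).PosSemidef :=
  stmt8_general Pm hsym h22 hker Pd hPd1
end

section
/- Let Π be a symmetric (q+r)×(q+r) real matrix with Π₂₂ ≤ 0 and ker Π₂₂ ⊆ ker Π₁₂. Then the set Z⁺_r(Π) = { Z ∈ ℝ^{r×q} : [I; Z]ᵀ Π [I; Z] > 0 } is nonempty if and only if Π|Π₂₂ = Π₁₁ − Π₁₂ Π₂₂† Π₂₁ > 0. -/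
/-!
Since ker Π₂₂ ⊆ ker Π₁₂ and Π₂₂ Π₂₂† Π₂₂ = Π₂₂, the block Π₁₂ factors as X Π₂₂ with X = Π₁₂ Π₂₂†,
and symmetry gives Π₂₁ = Π₂₂ Xᵀ. Completing the square then yields
  [I; Z]ᵀ Π [I; Z] = Π|Π₂₂ + (Z + Xᵀ)ᵀ Π₂₂ (Z + Xᵀ).
As Π₂₂ ≤ 0, the second term is negative semidefinite, so a positive definite value forces Π|Π₂₂ > 0;
conversely Z = -Xᵀ attains the value Π|Π₂₂.
-/

open Matrix

namespace Matrix

variable {m n k R : Type*} [Fintype n] [CommRing R]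

lemma mul_mul_eq_left_of_ker_le [DecidableEq n] [Fintype k] {B : Matrix m n R}
    {D : Matrix k n R} {G : Matrix n k R} (hDGD : D * G * D = D)
    (hker : ∀ x, D *ᵥ x = 0 → B *ᵥ x = 0) :
    B * G * D = B := by
  refine ext_of_mulVec_single fun i => ?_
  have hD : D *ᵥ (Pi.single i 1 - (G * D) *ᵥ Pi.single i 1) = 0 := by
    rw [mulVec_sub, mulVec_mulVec, ← Matrix.mul_assoc, hDGD, sub_self]
  have hB := hker _ hD
  rwa [mulVec_sub, mulVec_mulVec, sub_eq_zero, eq_comm, ← Matrix.mul_assoc] at hB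

lemma fromRows_one_transpose_mul_fromBlocks_mul_fromRows_one [Fintype m] [DecidableEq m]
    (A : Matrix m m R) (B : Matrix m n R) (C : Matrix n m R) (D : Matrix n n R)
    (Z : Matrix n m R) :
    (fromRows (1 : Matrix m m R) Z)ᵀ * fromBlocks A B C D * fromRows (1 : Matrix m m R) Z =
      A + B * Z + Zᵀ * C + Zᵀ * D * Z := by
  rw [Matrix.mul_assoc, fromBlocks_mul_fromRows, transpose_fromRows, fromCols_mul_fromRows]
  simp [Matrix.mul_add, Matrix.mul_assoc, add_assoc]

lemma fromRows_one_transpose_mul_fromBlocks_mul_fromRows_one_of_eq_mul [Fintype m]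
    [DecidableEq m] {A : Matrix m m R} {B : Matrix m n R} {C : Matrix n m R}
    {D : Matrix n n R} {X : Matrix m n R} (hB : B = X * D) (hC : C = D * Xᵀ)
    (Z : Matrix n m R) :
    (fromRows (1 : Matrix m m R) Z)ᵀ * fromBlocks A B C D * fromRows (1 : Matrix m m R) Z =
      A - X * D * Xᵀ + (Z + Xᵀ)ᵀ * D * (Z + Xᵀ) := by
  rw [fromRows_one_transpose_mul_fromBlocks_mul_fromRows_one, hB, hC]
  simp only [transpose_add, transpose_transpose, Matrix.add_mul, Matrix.mul_add,
    Matrix.mul_assoc]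
  abel

end Matrix

theorem stmt9_general {q r : ℕ} (Pm : Matrix (Fin q ⊕ Fin r) (Fin q ⊕ Fin r) ℝ)
    (hsym : Pm.IsSymm)
    (h22 : (-(Pm.toBlocks₂₂)).PosSemidef)
    (hker : ∀ x : Fin r → ℝ, (Pm.toBlocks₂₂).mulVec x = 0 → (Pm.toBlocks₁₂).mulVec x = 0)
    -- Pd is the Moore–Penrose pseudoinverse of Π₂₂ (the four Penrose conditions):
    (Pd : Matrix (Fin r) (Fin r) ℝ)
    (hPd1 : Pm.toBlocks₂₂ * Pd * Pm.toBlocks₂₂ = Pm.toBlocks₂₂) :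
    (∃ Z : Matrix (Fin r) (Fin q) ℝ,
        ((Matrix.fromRows (1 : Matrix (Fin q) (Fin q) ℝ) Z)ᵀ * Pm *
          Matrix.fromRows (1 : Matrix (Fin q) (Fin q) ℝ) Z).PosDef) ↔
    (Pm.toBlocks₁₁ - Pm.toBlocks₁₂ * Pd * Pm.toBlocks₂₁).PosDef := by
  rw [← Pm.fromBlocks_toBlocks, isSymm_fromBlocks_iff] at hsym
  obtain ⟨-, hBC, -, hD⟩ := hsym
  set D := Pm.toBlocks₂₂
  set X := Pm.toBlocks₁₂ * Pd
  have hB : Pm.toBlocks₁₂ = X * D := (mul_mul_eq_left_of_ker_le hPd1 hker).symm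
  have hC : Pm.toBlocks₂₁ = D * Xᵀ := by rw [← hBC, hB, transpose_mul, hD.eq]
  have hQ := fromRows_one_transpose_mul_fromBlocks_mul_fromRows_one_of_eq_mul
    (A := Pm.toBlocks₁₁) hB hC
  rw [Pm.fromBlocks_toBlocks] at hQ
  rw [hC, ← Matrix.mul_assoc]
  constructor
  · rintro ⟨Z, hZ⟩
    have hsq := h22.conjTranspose_mul_mul_same (Z + Xᵀ)
    rw [conjTranspose_eq_transpose_of_trivial, Matrix.mul_neg, Matrix.neg_mul] at hsq
    simpa [hQ] using hZ.add_posSemidef hsq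
  · intro hS
    exact ⟨-Xᵀ, by simpa [hQ] using hS⟩

theorem stmt9 {q r : ℕ} (Pm : Matrix (Fin q ⊕ Fin r) (Fin q ⊕ Fin r) ℝ)
    (hsym : Pm.IsSymm)
    (h22 : (-(Pm.toBlocks₂₂)).PosSemidef)
    (hker : ∀ x : Fin r → ℝ, (Pm.toBlocks₂₂).mulVec x = 0 → (Pm.toBlocks₁₂).mulVec x = 0)
    -- Pd is the Moore–Penrose pseudoinverse of Π₂₂ (the four Penrose conditions):
    (Pd : Matrix (Fin r) (Fin r) ℝ)
    (hPd1 : Pm.toBlocks₂₂ * Pd * Pm.toBlocks₂₂ = Pm.toBlocks₂₂)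
    (hPd2 : Pd * Pm.toBlocks₂₂ * Pd = Pd)
    (hPd3 : (Pm.toBlocks₂₂ * Pd)ᵀ = Pm.toBlocks₂₂ * Pd)
    (hPd4 : (Pd * Pm.toBlocks₂₂)ᵀ = Pd * Pm.toBlocks₂₂) :
    (∃ Z : Matrix (Fin r) (Fin q) ℝ,
        ((Matrix.fromRows (1 : Matrix (Fin q) (Fin q) ℝ) Z)ᵀ * Pm *
          Matrix.fromRows (1 : Matrix (Fin q) (Fin q) ℝ) Z).PosDef) ↔
    (Pm.toBlocks₁₁ - Pm.toBlocks₁₂ * Pd * Pm.toBlocks₂₁).PosDef :=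
  stmt9_general Pm hsym h22 hker Pd hPd1
end

section
/- Let Π be symmetric (q+r)×(q+r) with Π₂₂ ≤ 0, ker Π₂₂ ⊆ ker Π₁₂, and Π|Π₂₂ ≥ 0. Then every Z of the form Z = −Π₂₂† Π₂₁ + ((−Π₂₂)†)^{1/2} S (Π|Π₂₂)^{1/2} + (I − Π₂₂† Π₂₂) T with Sᵀ S ≤ I belongs to Z_r(Π), i.e., satisfies [I; Z]ᵀ Π [I; Z] ≥ 0. -/
/-!
Since `ker Π₂₂ ⊆ ker Π₁₂`, any generalized inverse `G` of `Π₂₂` satisfies `Π₁₂ G Π₂₂ = Π₁₂`, and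
completing the square gives
`[I; Z]ᵀ Π [I; Z] = Π|Π₂₂ + (Z + G Π₂₁)ᵀ Π₂₂ (Z + G Π₂₁)`.
For the given `Z`, the free term `(I - G Π₂₂) T` lies in `ker Π₂₂` and drops out, leaving
`R₂ R₂ + (R₁ S R₂)ᵀ Π₂₂ (R₁ S R₂) = R₂ (I - Sᵀ S + Sᵀ (I - K) S) R₂` with `K = R₁ (-Π₂₂) R₁`.
As `R₁² = (-Π₂₂)†`, `K` is a symmetric idempotent, so `I - K ≥ 0`, and `Sᵀ S ≤ I` finishes.
-/

open Matrix

theorem isIdempotentElem_mul_mul_of_mul_self_eq {M : Type*} [Semigroup M] {r m n : M}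
    (hr : r * r = n) (hm : m * n * m = m) : IsIdempotentElem (r * m * r) := by
  calc r * m * r * (r * m * r) = r * (m * (r * r) * m) * r := by simp only [mul_assoc]
    _ = r * m * r := by rw [hr, hm]

namespace Matrix

variable {l m n R : Type*}

theorem mul_mul_eq_of_ker_le_ker [CommRing R] [Fintype n] {B : Matrix l n R} {D G : Matrix n n R}
    (hDGD : D * G * D = D) (hker : ∀ x, D *ᵥ x = 0 → B *ᵥ x = 0) : B * G * D = B := by
  rw [ext_iff_mulVec]
  intro v
  have h := hker (v - G *ᵥ D *ᵥ v) (by rw [mulVec_sub, mulVec_mulVec, mulVec_mulVec, hDGD, sub_self])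
  rwa [mulVec_sub, sub_eq_zero, mulVec_mulVec, mulVec_mulVec, eq_comm] at h

theorem transpose_fromRows_one_mul_fromBlocks_mul_fromRows_one [CommRing R] [Fintype m]
    [Fintype n] [DecidableEq m] (A : Matrix m m R) (B : Matrix m n R) (C : Matrix n m R)
    (D : Matrix n n R) (Z : Matrix n m R) :
    (fromRows (1 : Matrix m m R) Z)ᵀ * fromBlocks A B C D * fromRows (1 : Matrix m m R) Z =
      A + B * Z + Zᵀ * C + Zᵀ * D * Z := by
  rw [transpose_fromRows, transpose_one, fromCols_mul_fromBlocks, fromCols_mul_fromRows]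
  simp only [Matrix.one_mul, Matrix.mul_one, Matrix.add_mul]
  abel

theorem quadForm_eq_schur_add [CommRing R] [Fintype n] {A : Matrix m m R} {B : Matrix m n R}
    {D G : Matrix n n R} (hD : Dᵀ = D) (hDGD : D * G * D = D) (hBGD : B * G * D = B)
    (Z : Matrix n m R) :
    A + B * Z + Zᵀ * Bᵀ + Zᵀ * D * Z = A - B * G * Bᵀ + (Z + G * Bᵀ)ᵀ * D * (Z + G * Bᵀ) := by
  have hDGt : D * Gᵀ * Bᵀ = Bᵀ := by
    simpa only [transpose_mul, hD, Matrix.mul_assoc] using congrArg transpose hBGD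
  have hDG : D * G * Bᵀ = Bᵀ := by
    rw [← hDGt]; simp only [← Matrix.mul_assoc]; rw [hDGD]
  have hGD : B * Gᵀ * D = B := by
    simpa only [transpose_mul, hD, transpose_transpose, Matrix.mul_assoc] using
      congrArg transpose hDG
  simp only [transpose_add, transpose_mul, transpose_transpose, Matrix.add_mul, Matrix.mul_add]
  rw [Matrix.mul_assoc Zᵀ D (G * Bᵀ), ← Matrix.mul_assoc D, hDG, hGD, Matrix.mul_assoc B G]
  abel

theorem transpose_mul_mul_add_of_mul_eq_zero [CommRing R] [Fintype n] {D : Matrix n n R}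
    {N : Matrix n m R} (hD : Dᵀ = D) (hDN : D * N = 0) (W : Matrix n m R) :
    (W + N)ᵀ * D * (W + N) = Wᵀ * D * W := by
  have hND : Nᵀ * D = 0 := by
    simpa only [transpose_mul, hD, transpose_zero] using congrArg transpose hDN
  rw [transpose_add, Matrix.add_mul, Matrix.add_mul, hND, Matrix.zero_mul, add_zero,
    Matrix.mul_add, Matrix.mul_assoc Wᵀ D N, hDN, Matrix.mul_zero, add_zero]

variable [Fintype m] [Fintype n] [DecidableEq m] [DecidableEq n]

theorem posSemidef_one_sub_of_isIdempotentElem {K : Matrix n n ℝ} (hK : Kᵀ = K)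
    (hKK : IsIdempotentElem K) : (1 - K).PosSemidef := by
  have h : 1 - K = (1 - K)ᴴ * (1 - K) := by
    rw [conjTranspose_eq_transpose_of_trivial, transpose_sub, transpose_one, hK]
    exact hKK.one_sub.eq.symm
  rw [h]
  exact posSemidef_conjTranspose_mul_self _

theorem posSemidef_mul_self_add_transpose_mul_mul {R₁ D : Matrix n n ℝ} {R₂ : Matrix m m ℝ}
    {S : Matrix n m ℝ} (hR₁ : R₁ᵀ = R₁) (hD : Dᵀ = D) (hR₂ : R₂ᵀ = R₂)
    (hK : IsIdempotentElem (R₁ * -D * R₁)) (hS : (1 - Sᵀ * S).PosSemidef) :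
    (R₂ * R₂ + (R₁ * S * R₂)ᵀ * D * (R₁ * S * R₂)).PosSemidef := by
  have hKt : (R₁ * -D * R₁)ᵀ = R₁ * -D * R₁ := by
    simp only [transpose_mul, transpose_neg, hR₁, hD, Matrix.mul_assoc]
  have hM := hS.add ((posSemidef_one_sub_of_isIdempotentElem hKt hK).conjTranspose_mul_mul_same S)
  convert hM.conjTranspose_mul_mul_same R₂ using 1
  simp only [conjTranspose_eq_transpose_of_trivial, transpose_mul, hR₁, hR₂, Matrix.mul_add,
    Matrix.add_mul, Matrix.mul_sub, Matrix.sub_mul, Matrix.mul_neg, Matrix.neg_mul,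
    Matrix.mul_one, Matrix.mul_assoc]
  abel

end Matrix

theorem stmt10_general {q r : ℕ} (Pm : Matrix (Fin q ⊕ Fin r) (Fin q ⊕ Fin r) ℝ)
    (hsym : Pm.IsSymm)
    (hker : ∀ x : Fin r → ℝ, (Pm.toBlocks₂₂).mulVec x = 0 → (Pm.toBlocks₁₂).mulVec x = 0)
    -- Pd is the Moore–Penrose pseudoinverse of Π₂₂:
    (Pd : Matrix (Fin r) (Fin r) ℝ)
    (hPd1 : Pm.toBlocks₂₂ * Pd * Pm.toBlocks₂₂ = Pm.toBlocks₂₂)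
    -- Nd is the Moore–Penrose pseudoinverse of -Π₂₂:
    (Nd : Matrix (Fin r) (Fin r) ℝ)
    (hNd1 : (-(Pm.toBlocks₂₂)) * Nd * (-(Pm.toBlocks₂₂)) = -(Pm.toBlocks₂₂))
    -- R1 is the psd square root of ((-Π₂₂)†), R2 of the Schur complement:
    (R1 : Matrix (Fin r) (Fin r) ℝ) (hR1 : R1.PosSemidef) (hR1sq : R1 * R1 = Nd)
    (R2 : Matrix (Fin q) (Fin q) ℝ) (hR2 : R2.PosSemidef)
    (hR2sq : R2 * R2 = Pm.toBlocks₁₁ - Pm.toBlocks₁₂ * Pd * Pm.toBlocks₂₁)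
    (S T : Matrix (Fin r) (Fin q) ℝ)
    (hS : ((1 : Matrix (Fin q) (Fin q) ℝ) - Sᵀ * S).PosSemidef)
    (Z : Matrix (Fin r) (Fin q) ℝ)
    (hZ : Z = -(Pd * Pm.toBlocks₂₁) + R1 * S * R2 +
      ((1 : Matrix (Fin r) (Fin r) ℝ) - Pd * Pm.toBlocks₂₂) * T) :
    ((Matrix.fromRows (1 : Matrix (Fin q) (Fin q) ℝ) Z)ᵀ * Pm *
      Matrix.fromRows (1 : Matrix (Fin q) (Fin q) ℝ) Z).PosSemidef := by
  obtain ⟨-, hC, -, hD⟩ := isSymm_fromBlocks_iff.mp ((fromBlocks_toBlocks Pm).symm ▸ hsym)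
  have hBGD := mul_mul_eq_of_ker_le_ker hPd1 hker
  have hfree : Pm.toBlocks₂₂ * ((1 - Pd * Pm.toBlocks₂₂) * T) = 0 := by
    rw [← Matrix.mul_assoc, Matrix.mul_sub, Matrix.mul_one, ← Matrix.mul_assoc, hPd1, sub_self,
      Matrix.zero_mul]
  have hZ' : Z + Pd * Pm.toBlocks₁₂ᵀ = R1 * S * R2 + (1 - Pd * Pm.toBlocks₂₂) * T := by
    rw [hZ, hC]; abel
  rw [← fromBlocks_toBlocks Pm, transpose_fromRows_one_mul_fromBlocks_mul_fromRows_one, ← hC,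
    quadForm_eq_schur_add hD hPd1 hBGD, hZ', transpose_mul_mul_add_of_mul_eq_zero hD hfree, hC,
    ← hR2sq]
  exact posSemidef_mul_self_add_transpose_mul_mul (isHermitian_iff_isSymm.mp hR1.isHermitian) hD
    (isHermitian_iff_isSymm.mp hR2.isHermitian) (isIdempotentElem_mul_mul_of_mul_self_eq hR1sq hNd1)
    hS

theorem stmt10 {q r : ℕ} (Pm : Matrix (Fin q ⊕ Fin r) (Fin q ⊕ Fin r) ℝ)
    (hsym : Pm.IsSymm)
    (h22 : (-(Pm.toBlocks₂₂)).PosSemidef)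
    (hker : ∀ x : Fin r → ℝ, (Pm.toBlocks₂₂).mulVec x = 0 → (Pm.toBlocks₁₂).mulVec x = 0)
    -- Pd is the Moore–Penrose pseudoinverse of Π₂₂:
    (Pd : Matrix (Fin r) (Fin r) ℝ)
    (hPd1 : Pm.toBlocks₂₂ * Pd * Pm.toBlocks₂₂ = Pm.toBlocks₂₂)
    (hPd2 : Pd * Pm.toBlocks₂₂ * Pd = Pd)
    (hPd3 : (Pm.toBlocks₂₂ * Pd)ᵀ = Pm.toBlocks₂₂ * Pd)
    (hPd4 : (Pd * Pm.toBlocks₂₂)ᵀ = Pd * Pm.toBlocks₂₂)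
    -- Nd is the Moore–Penrose pseudoinverse of -Π₂₂:
    (Nd : Matrix (Fin r) (Fin r) ℝ)
    (hNd1 : (-(Pm.toBlocks₂₂)) * Nd * (-(Pm.toBlocks₂₂)) = -(Pm.toBlocks₂₂))
    (hNd2 : Nd * (-(Pm.toBlocks₂₂)) * Nd = Nd)
    (hNd3 : ((-(Pm.toBlocks₂₂)) * Nd)ᵀ = (-(Pm.toBlocks₂₂)) * Nd)
    (hNd4 : (Nd * (-(Pm.toBlocks₂₂)))ᵀ = Nd * (-(Pm.toBlocks₂₂)))
    -- the generalized Schur complement is positive semidefinite: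
    (hSchur : (Pm.toBlocks₁₁ - Pm.toBlocks₁₂ * Pd * Pm.toBlocks₂₁).PosSemidef)
    -- R1 is the psd square root of ((-Π₂₂)†), R2 of the Schur complement:
    (R1 : Matrix (Fin r) (Fin r) ℝ) (hR1 : R1.PosSemidef) (hR1sq : R1 * R1 = Nd)
    (R2 : Matrix (Fin q) (Fin q) ℝ) (hR2 : R2.PosSemidef)
    (hR2sq : R2 * R2 = Pm.toBlocks₁₁ - Pm.toBlocks₁₂ * Pd * Pm.toBlocks₂₁)
    (S T : Matrix (Fin r) (Fin q) ℝ)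
    (hS : ((1 : Matrix (Fin q) (Fin q) ℝ) - Sᵀ * S).PosSemidef)
    (Z : Matrix (Fin r) (Fin q) ℝ)
    (hZ : Z = -(Pd * Pm.toBlocks₂₁) + R1 * S * R2 +
      ((1 : Matrix (Fin r) (Fin r) ℝ) - Pd * Pm.toBlocks₂₂) * T) :
    ((Matrix.fromRows (1 : Matrix (Fin q) (Fin q) ℝ) Z)ᵀ * Pm *
      Matrix.fromRows (1 : Matrix (Fin q) (Fin q) ℝ) Z).PosSemidef :=
  stmt10_general Pm hsym hker Pd hPd1 Nd hNd1 R1 hR1 hR1sq R2 hR2 hR2sq S T hS Z hZ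
end

section
/- Let Φ be a symmetric (n+T)×(n+T) matrix with Φ₂₂ < 0, and let X₋ ∈ ℝ^{n×T}, U₋ ∈ ℝ^{m×T}, X₊ ∈ ℝ^{n×T}. Define N = [I X₊; 0 −X₋; 0 −U₋] Φ [I X₊; 0 −X₋; 0 −U₋]ᵀ. Then a pair (A,B) satisfies (X₊ − AX₋ − BU₋)ᵀ ∈ Z_T(Φ) if and only if [A B]ᵀ ∈ Z_{n+m}(N), i.e., [I, A, B] N [I, A, B]ᵀ ≥ 0. -/
/-! Multiplying the data matrix `F = [I X₊; 0 -X₋; 0 -U₋]` on the left by `[I A B]` gives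
`[I (X₊ - A X₋ - B U₋)]`, so both quadratic forms in the statement are the same matrix. -/

open Matrix

theorem fromCols_fromCols_one_mul_dataMatrix {R n m T : Type*} [Ring R]
    [Fintype n] [Fintype m] [DecidableEq n]
    (A : Matrix n n R) (B : Matrix n m R) (Xm Xp : Matrix n T R) (Um : Matrix m T R) :
    fromCols (fromCols (1 : Matrix n n R) A) B *
        fromRows (fromRows (fromCols (1 : Matrix n n R) Xp) (fromCols (0 : Matrix n n R) (-Xm)))
          (fromCols (0 : Matrix m n R) (-Um)) =
      fromCols (1 : Matrix n n R) (Xp - A * Xm - B * Um) := by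
  rw [fromCols_mul_fromRows, fromCols_mul_fromRows, mul_fromCols, mul_fromCols, mul_fromCols]
  ext i (j | j)
  · simp
  · simp [sub_eq_add_neg]

theorem mul_mul_transpose_mul_assoc {R l m k : Type*} [CommSemiring R] [Fintype l] [Fintype m]
    (Q : Matrix k m R) (P : Matrix m l R) (Φ : Matrix l l R) :
    Q * (P * Φ * Pᵀ) * Qᵀ = (Q * P) * Φ * (Q * P)ᵀ := by
  simp only [transpose_mul, Matrix.mul_assoc]

theorem stmt14_general {n m T : ℕ} (Φ : Matrix (Fin n ⊕ Fin T) (Fin n ⊕ Fin T) ℝ)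
    (Xm Xp : Matrix (Fin n) (Fin T) ℝ) (Um : Matrix (Fin m) (Fin T) ℝ)
    (F : Matrix ((Fin n ⊕ Fin n) ⊕ Fin m) (Fin n ⊕ Fin T) ℝ)
    (hF : F = Matrix.fromRows
      (Matrix.fromRows (Matrix.fromCols (1 : Matrix (Fin n) (Fin n) ℝ) Xp)
        (Matrix.fromCols (0 : Matrix (Fin n) (Fin n) ℝ) (-Xm)))
      (Matrix.fromCols (0 : Matrix (Fin m) (Fin n) ℝ) (-Um)))
    (N : Matrix ((Fin n ⊕ Fin n) ⊕ Fin m) ((Fin n ⊕ Fin n) ⊕ Fin m) ℝ)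
    (hN : N = F * Φ * Fᵀ)
    (A : Matrix (Fin n) (Fin n) ℝ) (B : Matrix (Fin n) (Fin m) ℝ) :
    ((Matrix.fromRows (1 : Matrix (Fin n) (Fin n) ℝ) (Xp - A * Xm - B * Um)ᵀ)ᵀ * Φ *
        Matrix.fromRows (1 : Matrix (Fin n) (Fin n) ℝ) (Xp - A * Xm - B * Um)ᵀ).PosSemidef ↔
      (Matrix.fromCols (Matrix.fromCols (1 : Matrix (Fin n) (Fin n) ℝ) A) B * N *
        (Matrix.fromCols (Matrix.fromCols (1 : Matrix (Fin n) (Fin n) ℝ) A) B)ᵀ).PosSemidef := by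
  rw [hN, mul_mul_transpose_mul_assoc, hF, fromCols_fromCols_one_mul_dataMatrix,
    transpose_fromRows, transpose_one, transpose_transpose, transpose_fromCols, transpose_one]

theorem stmt14 {n m T : ℕ} (Φ : Matrix (Fin n ⊕ Fin T) (Fin n ⊕ Fin T) ℝ)
    (hsym : Φ.IsSymm) (hΦ22 : (-(Φ.toBlocks₂₂)).PosDef)
    (Xm Xp : Matrix (Fin n) (Fin T) ℝ) (Um : Matrix (Fin m) (Fin T) ℝ)
    (F : Matrix ((Fin n ⊕ Fin n) ⊕ Fin m) (Fin n ⊕ Fin T) ℝ)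
    (hF : F = Matrix.fromRows
      (Matrix.fromRows (Matrix.fromCols (1 : Matrix (Fin n) (Fin n) ℝ) Xp)
        (Matrix.fromCols (0 : Matrix (Fin n) (Fin n) ℝ) (-Xm)))
      (Matrix.fromCols (0 : Matrix (Fin m) (Fin n) ℝ) (-Um)))
    (N : Matrix ((Fin n ⊕ Fin n) ⊕ Fin m) ((Fin n ⊕ Fin n) ⊕ Fin m) ℝ)
    (hN : N = F * Φ * Fᵀ)
    (A : Matrix (Fin n) (Fin n) ℝ) (B : Matrix (Fin n) (Fin m) ℝ) :
    ((Matrix.fromRows (1 : Matrix (Fin n) (Fin n) ℝ) (Xp - A * Xm - B * Um)ᵀ)ᵀ * Φ *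
        Matrix.fromRows (1 : Matrix (Fin n) (Fin n) ℝ) (Xp - A * Xm - B * Um)ᵀ).PosSemidef ↔
      (Matrix.fromCols (Matrix.fromCols (1 : Matrix (Fin n) (Fin n) ℝ) A) B * N *
        (Matrix.fromCols (Matrix.fromCols (1 : Matrix (Fin n) (Fin n) ℝ) A) B)ᵀ).PosSemidef :=
  stmt14_general Φ Xm Xp Um F hF N hN A B
end

section
/- With N defined from data as N = [I X₊; 0 −X₋; 0 −U₋] Φ [I X₊; 0 −X₋; 0 −U₋]ᵀ where Φ₂₂ < 0, the set Σ_D = {(A,B) : [I, A, B] N [I, A, B]ᵀ ≥ 0} is bounded if the (n+m)×T matrix [X₋; U₋] has full row rank n+m (equivalently [X₋ᵀ U₋ᵀ] has full column rank). -/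
/-! Multiplying the data matrix on the left by `[I A B]` gives `[I V]` with
`V = X₊ - A X₋ - B U₋`, so the QMI reads `[I V] Φ [I V]ᵀ ≥ 0`. Its `i`-th diagonal entry gives
`vᵀ M v ≤ Φ₁₁ᵢᵢ + 2 Φ₁₂ᵢ v` for the row `v = Vᵢ`, where `M = -Φ₂₂ > 0`; Cauchy–Schwarz for the
inner products defined by `M` and `M⁻¹` bounds `vᵀ M v`, and then every entry of `v`.
Full row rank of `[X₋; U₋]` gives a right inverse `Q`, so `[A B] = (X₊ - V) Q` is bounded too. -/

open Matrix

namespace Matrix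

lemma fromCols_fromCols_one_mul_fromRows_fromRows {R n m T : Type*} [Ring R] [Fintype n]
    [Fintype m] [DecidableEq n]
    (A : Matrix n n R) (B : Matrix n m R) (Xm Xp : Matrix n T R) (Um : Matrix m T R) :
    fromCols (fromCols (1 : Matrix n n R) A) B *
        fromRows (fromRows (fromCols (1 : Matrix n n R) Xp) (fromCols (0 : Matrix n n R) (-Xm)))
          (fromCols (0 : Matrix m n R) (-Um)) =
      fromCols 1 (Xp - (A * Xm + B * Um)) := by
  rw [fromCols_mul_fromRows, fromCols_mul_fromRows, mul_fromCols, mul_fromCols, mul_fromCols]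
  ext i (j | j)
  · simp
  · simp; abel

lemma exists_mul_eq_one_of_rank_eq_card {m T K : Type*} [Fintype m] [DecidableEq m] [Fintype T]
    [Field K] (W : Matrix m T K) (hW : W.rank = Fintype.card m) :
    ∃ Q : Matrix T m K, W * Q = 1 := by
  rw [← mulVec_surjective_iff_exists_right_inverse, ← coe_mulVecLin, ← LinearMap.range_eq_top]
  exact Submodule.eq_top_of_finrank_eq (by rw [← rank, hW, Module.finrank_fintype_fun_eq_card])

lemma exists_abs_le_of_abs_mul_le {ι m T : Type*} [Fintype m] [DecidableEq m] [Fintype T]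
    (W : Matrix m T ℝ) (hW : W.rank = Fintype.card m) (c : ℝ) :
    ∃ C, ∀ Z : Matrix ι m ℝ, (∀ i j, |(Z * W) i j| ≤ c) → ∀ i k, |Z i k| ≤ C := by
  obtain ⟨Q, hQ⟩ := exists_mul_eq_one_of_rank_eq_card W hW
  obtain ⟨C, hC⟩ := (Set.finite_range fun k => c * ∑ j, |Q j k|).bddAbove
  refine ⟨C, fun Z hZ i k => le_trans ?_ (hC ⟨k, rfl⟩)⟩
  calc |Z i k| = |∑ j, (Z * W) i j * Q j k| := by
        rw [← mul_apply, Matrix.mul_assoc, hQ, Matrix.mul_one]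
    _ ≤ ∑ j, |(Z * W) i j| * |Q j k| := by
        simpa only [abs_mul] using Finset.abs_sum_le_sum_abs (fun j => (Z * W) i j * Q j k) _
    _ ≤ ∑ j, c * |Q j k| := by gcongr with j; exact hZ i j
    _ = c * ∑ j, |Q j k| := by rw [Finset.mul_sum]

variable {ι κ : Type*} [Fintype κ]

lemma PosSemidef.sq_dotProduct_mulVec_le {M : Matrix κ κ ℝ} (hM : M.PosSemidef) (x y : κ → ℝ) :
    (x ⬝ᵥ M *ᵥ y) ^ 2 ≤ (x ⬝ᵥ M *ᵥ x) * (y ⬝ᵥ M *ᵥ y) := by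
  have hyx : y ⬝ᵥ M *ᵥ x = x ⬝ᵥ M *ᵥ y := by
    rw [dotProduct_mulVec, ← mulVec_transpose, show Mᵀ = M from hM.isHermitian, dotProduct_comm]
  have hquad : ∀ t : ℝ,
      0 ≤ (y ⬝ᵥ M *ᵥ y) * (t * t) + (2 * (x ⬝ᵥ M *ᵥ y)) * t + x ⬝ᵥ M *ᵥ x := by
    intro t
    have h := hM.dotProduct_mulVec_nonneg (x + t • y)
    simp only [star_trivial, mulVec_add, mulVec_smul, dotProduct_add, add_dotProduct,
      smul_dotProduct, dotProduct_smul, smul_eq_mul, hyx] at h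
    linarith
  have hdiscr := discrim_le_zero hquad
  rw [discrim] at hdiscr
  linarith

lemma PosSemidef.row_dotProduct_mulVec_nonneg {P : Matrix ι κ ℝ} {Φ : Matrix κ κ ℝ}
    (h : (P * Φ * Pᵀ).PosSemidef) (i : ι) : 0 ≤ P i ⬝ᵥ Φ *ᵥ P i := by
  have hdiag : (P * Φ * Pᵀ) i i = P i ⬝ᵥ Φ *ᵥ P i := by
    rw [mul_apply', dotProduct_mulVec]
    rfl
  exact hdiag ▸ h.diag_nonneg

variable [Fintype ι]

lemma IsSymm.sumElim_dotProduct_mulVec_sumElim {Φ : Matrix (ι ⊕ κ) (ι ⊕ κ) ℝ} (hΦ : Φ.IsSymm)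
    (x : ι → ℝ) (v : κ → ℝ) :
    Sum.elim x v ⬝ᵥ Φ *ᵥ Sum.elim x v =
      x ⬝ᵥ Φ.toBlocks₁₁ *ᵥ x + 2 * (x ⬝ᵥ Φ.toBlocks₁₂ *ᵥ v) + v ⬝ᵥ Φ.toBlocks₂₂ *ᵥ v := by
  have h21 : Φ.toBlocks₂₁ = Φ.toBlocks₁₂ᵀ := by
    ext k i
    exact hΦ.apply (Sum.inl i) (Sum.inr k)
  have hcross : v ⬝ᵥ Φ.toBlocks₂₁ *ᵥ x = x ⬝ᵥ Φ.toBlocks₁₂ *ᵥ v := by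
    rw [h21, mulVec_transpose, dotProduct_comm, ← dotProduct_mulVec]
  conv_lhs => rw [← fromBlocks_toBlocks Φ, fromBlocks_mulVec, sumElim_dotProduct_sumElim,
    Sum.elim_comp_inl, Sum.elim_comp_inr, dotProduct_add, dotProduct_add, hcross]
  ring

variable [DecidableEq κ]

lemma PosDef.sq_dotProduct_le {M : Matrix κ κ ℝ} (hM : M.PosDef) (w v : κ → ℝ) :
    (w ⬝ᵥ v) ^ 2 ≤ (w ⬝ᵥ M⁻¹ *ᵥ w) * (v ⬝ᵥ M *ᵥ v) := by
  have hMw : M *ᵥ (M⁻¹ *ᵥ w) = w := by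
    rw [mulVec_mulVec, mul_nonsing_inv _ ((isUnit_iff_isUnit_det M).mp hM.isUnit), one_mulVec]
  have hcs := hM.posSemidef.sq_dotProduct_mulVec_le (M⁻¹ *ᵥ w) v
  rwa [dotProduct_mulVec (M⁻¹ *ᵥ w), ← mulVec_transpose, show Mᵀ = M from hM.isHermitian, hMw,
    dotProduct_comm (M⁻¹ *ᵥ w)] at hcs

lemma PosDef.sq_apply_le_trace_inv_mul {M : Matrix κ κ ℝ} (hM : M.PosDef) (v : κ → ℝ) (j : κ) :
    v j ^ 2 ≤ M⁻¹.trace * (v ⬝ᵥ M *ᵥ v) := by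
  have hcs := hM.sq_dotProduct_le (Pi.single j 1) v
  rw [single_dotProduct, one_mul, mulVec_single_one, single_dotProduct, one_mul] at hcs
  have hdiag : M⁻¹ j j ≤ M⁻¹.trace :=
    Finset.single_le_sum (f := fun k => M⁻¹ k k) (fun _ _ => hM.inv.posSemidef.diag_nonneg)
      (Finset.mem_univ j)
  exact hcs.trans (mul_le_mul_of_nonneg_right hdiag (hM.posSemidef.dotProduct_mulVec_nonneg v))

lemma PosDef.dotProduct_mulVec_le_of_le_add {M : Matrix κ κ ℝ} (hM : M.PosDef) {a : ℝ}
    {w v : κ → ℝ} (h : v ⬝ᵥ M *ᵥ v ≤ a + 2 * (w ⬝ᵥ v)) :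
    v ⬝ᵥ M *ᵥ v ≤ 2 * |a| + 4 * (w ⬝ᵥ M⁻¹ *ᵥ w) := by
  have hcs := hM.sq_dotProduct_le w v
  have hq := hM.posSemidef.dotProduct_mulVec_nonneg v
  have hβ := hM.inv.posSemidef.dotProduct_mulVec_nonneg w
  simp only [star_trivial] at hq hβ
  nlinarith [le_abs_self a, sq_nonneg ((v ⬝ᵥ M *ᵥ v) / 4 - w ⬝ᵥ M⁻¹ *ᵥ w)]

lemma PosDef.abs_apply_le_of_le_add {M : Matrix κ κ ℝ} (hM : M.PosDef) {a : ℝ}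
    {w v : κ → ℝ} (h : v ⬝ᵥ M *ᵥ v ≤ a + 2 * (w ⬝ᵥ v)) (j : κ) :
    |v j| ≤ √(M⁻¹.trace * (2 * |a| + 4 * (w ⬝ᵥ M⁻¹ *ᵥ w))) :=
  Real.abs_le_sqrt <| (hM.sq_apply_le_trace_inv_mul v j).trans <|
    mul_le_mul_of_nonneg_left (hM.dotProduct_mulVec_le_of_le_add h) hM.inv.posSemidef.trace_nonneg

lemma exists_abs_le_of_posSemidef_fromCols_one [DecidableEq ι] {Φ : Matrix (ι ⊕ κ) (ι ⊕ κ) ℝ}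
    (hΦ : Φ.IsSymm) (hΦ₂₂ : (-Φ.toBlocks₂₂).PosDef) :
    ∃ C, ∀ V : Matrix ι κ ℝ,
      (fromCols (1 : Matrix ι ι ℝ) V * Φ * (fromCols (1 : Matrix ι ι ℝ) V)ᵀ).PosSemidef →
      ∀ i j, |V i j| ≤ C := by
  set M := -Φ.toBlocks₂₂ with hM
  let bound (i : ι) : ℝ :=
    √(M⁻¹.trace * (2 * |Φ.toBlocks₁₁ i i| + 4 * (Φ.toBlocks₁₂ i ⬝ᵥ M⁻¹ *ᵥ Φ.toBlocks₁₂ i)))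
  obtain ⟨C, hC⟩ := (Set.finite_range bound).bddAbove
  refine ⟨C, fun V hV i j => (hΦ₂₂.abs_apply_le_of_le_add ?_ j).trans (hC ⟨i, rfl⟩)⟩
  have hrow : fromCols (1 : Matrix ι ι ℝ) V i = Sum.elim (Pi.single i 1) (V i) := by
    ext (k | k) <;> simp [one_apply, Pi.single_apply, eq_comm]
  have h := hV.row_dotProduct_mulVec_nonneg i
  rw [hrow, hΦ.sumElim_dotProduct_mulVec_sumElim, single_dotProduct, single_dotProduct,
    mulVec_single_one, one_mul, one_mul, col_apply, ← neg_neg Φ.toBlocks₂₂, ← hM, neg_mulVec,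
    dotProduct_neg] at h
  change _ ≤ _ + 2 * (Φ.toBlocks₁₂ *ᵥ V i) i
  linarith

end Matrix

theorem stmt15 {n m T : ℕ} (Φ : Matrix (Fin n ⊕ Fin T) (Fin n ⊕ Fin T) ℝ)
    (hsym : Φ.IsSymm) (hΦ22 : (-(Φ.toBlocks₂₂)).PosDef)
    (Xm Xp : Matrix (Fin n) (Fin T) ℝ) (Um : Matrix (Fin m) (Fin T) ℝ)
    (N : Matrix ((Fin n ⊕ Fin n) ⊕ Fin m) ((Fin n ⊕ Fin n) ⊕ Fin m) ℝ)
    (hN : N = (Matrix.fromRows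
      (Matrix.fromRows (Matrix.fromCols (1 : Matrix (Fin n) (Fin n) ℝ) Xp)
        (Matrix.fromCols (0 : Matrix (Fin n) (Fin n) ℝ) (-Xm)))
      (Matrix.fromCols (0 : Matrix (Fin m) (Fin n) ℝ) (-Um))) * Φ *
      (Matrix.fromRows
      (Matrix.fromRows (Matrix.fromCols (1 : Matrix (Fin n) (Fin n) ℝ) Xp)
        (Matrix.fromCols (0 : Matrix (Fin n) (Fin n) ℝ) (-Xm)))
      (Matrix.fromCols (0 : Matrix (Fin m) (Fin n) ℝ) (-Um)))ᵀ)
    (hrank : (Matrix.fromRows Xm Um).rank = n + m) :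
    ∃ C : ℝ, ∀ (A : Matrix (Fin n) (Fin n) ℝ) (B : Matrix (Fin n) (Fin m) ℝ),
      (Matrix.fromCols (Matrix.fromCols (1 : Matrix (Fin n) (Fin n) ℝ) A) B * N *
        (Matrix.fromCols (Matrix.fromCols (1 : Matrix (Fin n) (Fin n) ℝ) A) B)ᵀ).PosSemidef →
      (∀ i j, |A i j| ≤ C) ∧ (∀ i j, |B i j| ≤ C) := by
  obtain ⟨CV, hCV⟩ := exists_abs_le_of_posSemidef_fromCols_one hsym hΦ22
  obtain ⟨CX, hCX⟩ := (Set.finite_range fun p : Fin n × Fin T => |Xp p.1 p.2|).bddAbove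
  obtain ⟨C, hC⟩ := exists_abs_le_of_abs_mul_le (ι := Fin n) (fromRows Xm Um)
    (by rw [hrank, Fintype.card_sum, Fintype.card_fin, Fintype.card_fin]) (CX + CV)
  refine ⟨C, fun A B hAB => ?_⟩
  set V := Xp - (A * Xm + B * Um)
  have hV : ∀ i j, |V i j| ≤ CV := hCV V <| by
    rw [← fromCols_fromCols_one_mul_fromRows_fromRows, transpose_mul]
    simpa only [hN, Matrix.mul_assoc] using hAB
  have hZW : fromCols A B * fromRows Xm Um = Xp - V := by
    rw [fromCols_mul_fromRows, sub_sub_cancel]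
  have hZ : ∀ i k, |fromCols A B i k| ≤ C := hC (fromCols A B) fun i j => by
    rw [hZW, Matrix.sub_apply]
    exact (abs_sub _ _).trans (add_le_add (hCX ⟨(i, j), rfl⟩) (hV i j))
  exact ⟨fun i j => hZ i (.inl j), fun i j => hZ i (.inr j)⟩
end

section
/- Let P, Q be symmetric positive definite n×n matrices, A_c ∈ ℝ^{n×n}, B ∈ ℝ^{n×m}, β > 0, and suppose the block matrix [[Q − A_c Q A_cᵀ − BBᵀ, −A_c Q],[−Q A_cᵀ, βI − Q]] is positive semidefinite. Then for every Δ ∈ ℝ^{m×n}, Q − (A_c + BΔ) Q (A_c + BΔ)ᵀ ≥ B(I − β Δ Δᵀ)Bᵀ. -/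
open Matrix

theorem Matrix.PosSemidef.add_mul_add_mul_conjTranspose_of_fromBlocks
    {m n R : Type*} [Fintype m] [Fintype n] [DecidableEq m]
    [Ring R] [PartialOrder R] [StarRing R]
    {A : Matrix m m R} {B : Matrix m n R} {C : Matrix n m R} {D : Matrix n n R}
    (h : (fromBlocks A B C D).PosSemidef) (X : Matrix m n R) :
    (A + X * C + B * Xᴴ + X * D * Xᴴ).PosSemidef := by
  have hcongr := h.mul_mul_conjTranspose_same (fromCols (1 : Matrix m m R) X)
  simp only [conjTranspose_fromCols_eq_fromRows_conjTranspose, fromCols_mul_fromBlocks,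
    fromCols_mul_fromRows, conjTranspose_one, Matrix.mul_one, Matrix.one_mul,
    Matrix.add_mul] at hcongr
  convert hcongr using 1
  abel

theorem stmt17_general {n m : ℕ} (Q Ac : Matrix (Fin n) (Fin n) ℝ) (B : Matrix (Fin n) (Fin m) ℝ)
    (β : ℝ)
    (hblk : (Matrix.fromBlocks (Q - Ac * Q * Acᵀ - B * Bᵀ) (-(Ac * Q))
      (-(Q * Acᵀ)) (β • (1 : Matrix (Fin n) (Fin n) ℝ) - Q)).PosSemidef) :
    ∀ Δ : Matrix (Fin m) (Fin n) ℝ,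
      (Q - (Ac + B * Δ) * Q * (Ac + B * Δ)ᵀ -
        B * ((1 : Matrix (Fin m) (Fin m) ℝ) - β • (Δ * Δᵀ)) * Bᵀ).PosSemidef := by
  intro Δ
  convert hblk.add_mul_add_mul_conjTranspose_of_fromBlocks (B * Δ) using 1
  simp only [conjTranspose_eq_transpose_of_trivial, transpose_add, transpose_mul,
    Matrix.mul_add, Matrix.add_mul, Matrix.mul_sub, Matrix.sub_mul, Matrix.mul_smul,
    Matrix.smul_mul, Matrix.mul_one, Matrix.mul_assoc, Matrix.mul_neg,
    Matrix.neg_mul]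
  abel

theorem stmt17 {n m : ℕ} (P Q Ac : Matrix (Fin n) (Fin n) ℝ) (B : Matrix (Fin n) (Fin m) ℝ)
    (β : ℝ) (hβ : 0 < β) (hP : P.PosDef) (hQ : Q.PosDef)
    (hblk : (Matrix.fromBlocks (Q - Ac * Q * Acᵀ - B * Bᵀ) (-(Ac * Q))
      (-(Q * Acᵀ)) (β • (1 : Matrix (Fin n) (Fin n) ℝ) - Q)).PosSemidef) :
    ∀ Δ : Matrix (Fin m) (Fin n) ℝ,
      (Q - (Ac + B * Δ) * Q * (Ac + B * Δ)ᵀ -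
        B * ((1 : Matrix (Fin m) (Fin m) ℝ) - β • (Δ * Δᵀ)) * Bᵀ).PosSemidef :=
  stmt17_general Q Ac B β hblk
end
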